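/- Let r > 2, c > 0, C₁ > 0, and β ∈ ℂ. There exists a constant C > 0, depending only on r, c, C₁, and |β|, with the following property. Let γ ∈ ℂ with γ ≠ 0, and let ν⁻, ν⁺ ∈ ℂ satisfy |ν⁻| ≤ C₁|γ|, |ν⁺| ≤ C₁|γ|, Re ν⁻ ≤ −c|γ|, and Re ν⁺ ≥ c|γ|. Define H : ℝ → ℂ by H(ξ) = (β ν⁻/γ) e^{ν⁻ ξ} for ξ ≥ 0 and H(ξ) = (β ν⁺/γ) e^{ν⁺ ξ} for ξ < 0. Then for every odd measurable g : ℝ → ℝ with |g(y)| ≤ M⟨y⟩^{−r} for all y ∈ ℝ, one has ∫_ℝ ⟨x⟩ |∫_ℝ H(x−y) g(y) dy| dx ≤ C M / |γ|. -/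

import Mathlib

open MeasureTheory Set

open scoped ENNReal

/-!
Since `g` is odd, `∫ H (x - y) g y = ½ ∫ (H (x - y) - H (x + y)) g y`. For `|y| < |x|` both
terms lie on the same exponential branch and differ by a factor `1 - exp (2 ν |y|)` of size
`min 1 (|γ| |y|)`; this cancels the extra `1 / |γ|` that the weight `⟨x⟩` produces when
`exp (-c |γ| (|x| - |y|))` is integrated in `x`. For `|x| ≤ |y|` the weight is at most `⟨y⟩`.
Hence `∫ ⟨x⟩ |H (x - y) - H (x + y)| dx ≲ ⟨y⟩ / |γ|`, and Tonelli together with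
`∫ ⟨y⟩ ^ (1 - r) dy < ∞` for `r > 2` gives the estimate.
-/

lemma norm_one_sub_cexp_le {z : ℂ} (hz : z.re ≤ 0) : ‖1 - Complex.exp z‖ ≤ 2 * min 1 ‖z‖ := by
  rcases le_total ‖z‖ 1 with h | h
  · rw [min_eq_right h, norm_sub_rev]
    exact Complex.norm_exp_sub_one_le h
  · rw [min_eq_left h]
    calc ‖1 - Complex.exp z‖ ≤ ‖(1 : ℂ)‖ + ‖Complex.exp z‖ := norm_sub_le _ _
      _ ≤ 2 * 1 := by rw [norm_one, Complex.norm_exp]; linarith [Real.exp_le_one_iff.2 hz]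

lemma min_one_mul_le {L s : ℝ} (hL : 0 ≤ L) (hs : 0 ≤ s) :
    min 1 (L * s) ≤ (1 + L) * min 1 s := by
  rcases le_total s 1 with h | h
  · rw [min_eq_right h]; nlinarith [min_le_right 1 (L * s)]
  · rw [min_eq_left h]; linarith [min_le_left 1 (L * s)]

section ExpDecay

variable {ν : ℂ} {b : ℝ}

lemma norm_cexp_mul_ofReal_le (hν : ν.re ≤ -b) {v : ℝ} (hv : 0 ≤ v) :
    ‖Complex.exp (ν * v)‖ ≤ Real.exp (-(b * v)) := by
  rw [Complex.norm_exp, Complex.re_mul_ofReal]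
  exact Real.exp_le_exp.2 (by nlinarith)

lemma norm_cexp_mul_add_sub_le (hb : 0 ≤ b) (hν : ν.re ≤ -b) {v p : ℝ} (hv : 0 ≤ v)
    (hp : 0 ≤ p) :
    ‖Complex.exp (ν * ↑(v + p)) - Complex.exp (ν * v)‖ ≤
      2 * Real.exp (-(b * v)) * min 1 (‖ν‖ * p) := by
  have hfactor : Complex.exp (ν * ↑(v + p)) - Complex.exp (ν * v) =
      -(Complex.exp (ν * v) * (1 - Complex.exp (ν * p))) := by
    push_cast; rw [mul_add, Complex.exp_add]; ring
  have hre : (ν * p).re ≤ 0 := by rw [Complex.re_mul_ofReal]; nlinarith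
  have hnorm : ‖ν * p‖ = ‖ν‖ * p := by rw [norm_mul, Complex.norm_real, Real.norm_of_nonneg hp]
  rw [hfactor, norm_neg, norm_mul, mul_comm 2, mul_assoc, ← hnorm]
  exact mul_le_mul (norm_cexp_mul_ofReal_le hν hv) (norm_one_sub_cexp_le hre) (norm_nonneg _)
    (Real.exp_nonneg _)

lemma norm_mul_cexp_add_sub_le {κ : ℂ} {L a : ℝ} (hb : 0 ≤ b) (hν : ν.re ≤ -b)
    (hL : 0 ≤ L) (ha : 0 ≤ a) (hνL : ‖ν‖ ≤ L * a) {v y : ℝ} (hv : 0 ≤ v) (hy : 0 ≤ y) :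
    ‖κ * Complex.exp (ν * ↑(v + 2 * y)) - κ * Complex.exp (ν * v)‖ ≤
      2 * ‖κ‖ * (1 + 2 * L) * min 1 (a * y) * Real.exp (-(b * v)) := by
  have hmin : min 1 (‖ν‖ * (2 * y)) ≤ (1 + 2 * L) * min 1 (a * y) :=
    calc min 1 (‖ν‖ * (2 * y)) ≤ min 1 (2 * L * (a * y)) :=
          min_le_min_left 1 (by nlinarith [norm_nonneg ν])
      _ ≤ (1 + 2 * L) * min 1 (a * y) := min_one_mul_le (by positivity) (by positivity)
  rw [← mul_sub, norm_mul]
  calc ‖κ‖ * ‖Complex.exp (ν * ↑(v + 2 * y)) - Complex.exp (ν * v)‖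
      ≤ ‖κ‖ * (2 * Real.exp (-(b * v)) * ((1 + 2 * L) * min 1 (a * y))) := by
        gcongr
        exact (norm_cexp_mul_add_sub_le hb hν hv (by positivity)).trans (by gcongr)
    _ = _ := by ring

end ExpDecay

lemma sqrt_one_add_sq_le_add_abs_sub (x y : ℝ) : √(1 + x ^ 2) ≤ √(1 + y ^ 2) + |x - y| := by
  have hy : |y| ≤ √(1 + y ^ 2) := Real.abs_le_sqrt (by nlinarith)
  have hx : |x| ^ 2 ≤ (|y| + |x - y|) ^ 2 := by
    gcongr; simpa using abs_add_le y (x - y)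
  rw [Real.sqrt_le_iff]
  refine ⟨by positivity, ?_⟩
  nlinarith [Real.sq_sqrt (by positivity : (0 : ℝ) ≤ 1 + y ^ 2), sq_abs x, sq_abs y,
    mul_le_mul_of_nonneg_right hy (abs_nonneg (x - y))]

lemma sqrt_one_add_sq_le_of_abs_le {x y : ℝ} (h : |x| ≤ |y|) : √(1 + x ^ 2) ≤ √(1 + y ^ 2) := by
  gcongr 2
  exact sq_le_sq.2 h

lemma lintegral_comp_abs_le {F : ℝ → ℝ≥0∞} (hF : Measurable F) :
    ∫⁻ s, F |s| ≤ 2 * ∫⁻ s in Ici 0, F s := by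
  have hpt : ∀ s : ℝ, F |s| ≤ (Ici 0).indicator F s + (Ici 0).indicator F (-s) := by
    intro s
    rcases le_total 0 s with hs | hs
    · rw [abs_of_nonneg hs, indicator_of_mem (mem_Ici.2 hs)]; exact le_self_add
    · rw [abs_of_nonpos hs, indicator_of_mem (mem_Ici.2 (neg_nonneg.2 hs))]; exact le_add_self
  calc ∫⁻ s, F |s|
      ≤ ∫⁻ s, (Ici 0).indicator F s + (Ici 0).indicator F (-s) := lintegral_mono hpt
    _ = 2 * ∫⁻ s in Ici 0, F s := by
      rw [lintegral_add_left (hF.indicator measurableSet_Ici),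
        lintegral_neg_eq_self ((Ici 0).indicator F), lintegral_indicator measurableSet_Ici, two_mul]

lemma lintegral_comp_abs_abs_sub_le {F : ℝ → ℝ≥0∞} (hF : Measurable F) (t : ℝ) :
    ∫⁻ x, F |(|x| - t)| ≤ 4 * ∫⁻ s in Ici 0, F s := by
  have hpt : ∀ x : ℝ, F |(|x| - t)| ≤ F |x - t| + F |x + t| := by
    intro x
    rcases le_total 0 x with hx | hx
    · rw [abs_of_nonneg hx]; exact le_self_add
    · rw [abs_of_nonpos hx, show -x - t = -(x + t) by ring, abs_neg]; exact le_add_self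
  calc ∫⁻ x, F |(|x| - t)|
      ≤ ∫⁻ x, F |x - t| + F |x + t| := lintegral_mono hpt
    _ = 2 * ∫⁻ s, F |s| := by
      rw [lintegral_add_left (by fun_prop : Measurable fun x => F |x - t|),
        lintegral_sub_right_eq_self (fun s => F |s|), lintegral_add_right_eq_self (fun s => F |s|),
        two_mul]
    _ ≤ 2 * (2 * ∫⁻ s in Ici 0, F s) := by gcongr; exact lintegral_comp_abs_le hF
    _ = 4 * ∫⁻ s in Ici 0, F s := by rw [← mul_assoc]; norm_num

lemma lintegral_Ici_affine_mul_exp_neg_mul {b : ℝ} (hb : 0 < b) {p q : ℝ} (hp : 0 ≤ p)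
    (hq : 0 ≤ q) :
    ∫⁻ s in Ici 0, ENNReal.ofReal ((p + q * s) * Real.exp (-(b * s))) =
      ENNReal.ofReal (p / b + q / b ^ 2) := by
  have h0 : IntegrableOn (fun s => Real.exp (-(b * s))) (Ioi 0) := by
    simpa [neg_mul] using exp_neg_integrableOn_Ioi 0 hb
  have h1 : IntegrableOn (fun s => s * Real.exp (-(b * s))) (Ioi 0) := by
    simpa [neg_mul] using
      integrableOn_rpow_mul_exp_neg_mul_rpow (s := 1) (p := 1) (by norm_num) one_pos hb
  have e0 : ∫ s in Ioi 0, Real.exp (-(b * s)) = 1 / b := by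
    simpa using Real.integral_rpow_mul_exp_neg_mul_Ioi one_pos hb
  have e1 : ∫ s in Ioi 0, s * Real.exp (-(b * s)) = 1 / b ^ 2 := by
    have := Real.integral_rpow_mul_exp_neg_mul_Ioi two_pos hb
    norm_num [Real.Gamma_two] at this
    simpa using this
  have hsplit : (fun s => (p + q * s) * Real.exp (-(b * s))) =
      fun s => p * Real.exp (-(b * s)) + q * (s * Real.exp (-(b * s))) := by
    ext s; ring
  have hint : IntegrableOn (fun s => (p + q * s) * Real.exp (-(b * s))) (Ioi 0) := by
    rw [hsplit]; exact (h0.const_mul p).add (h1.const_mul q)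
  have hval : p / b + q / b ^ 2 = ∫ s in Ioi 0, (p + q * s) * Real.exp (-(b * s)) := by
    rw [hsplit, integral_add (h0.const_mul p) (h1.const_mul q), integral_const_mul,
      integral_const_mul, e0, e1]
    ring
  rw [← Measure.restrict_congr_set Ioi_ae_eq_Ici, hval, ofReal_integral_eq_lintegral_ofReal hint]
  filter_upwards [ae_restrict_mem measurableSet_Ioi] with s hs
  have : 0 ≤ s := le_of_lt hs
  positivity

lemma integrable_sqrt_one_add_sq_rpow_neg {s : ℝ} (hs : 1 < s) :
    Integrable fun y : ℝ => √(1 + y ^ 2) ^ (-s) := by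
  refine (integrable_rpow_neg_one_add_norm_sq (E := ℝ) (μ := volume) (r := s)
    (by simpa using hs)).congr (Filter.Eventually.of_forall fun y => ?_)
  dsimp only
  rw [Real.norm_eq_abs, sq_abs, Real.sqrt_eq_rpow, ← Real.rpow_mul (by positivity)]
  ring_nf

lemma integral_le_of_lintegral_ofReal_le {α : Type*} [MeasurableSpace α] {μ : Measure α}
    {f : α → ℝ} (hf : ∀ x, 0 ≤ f x) {B : ℝ} (hB : 0 ≤ B)
    (h : ∫⁻ x, ENNReal.ofReal (f x) ∂μ ≤ ENNReal.ofReal B) : ∫ x, f x ∂μ ≤ B := by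
  have hnorm := norm_integral_le_lintegral_norm f (μ := μ)
  simp only [Real.norm_of_nonneg (hf _)] at hnorm
  exact (le_abs_self _).trans (hnorm.trans (ENNReal.toReal_le_of_le_ofReal hB h))

lemma two_mul_enorm_integral_le_lintegral_enorm_add_comp_neg {G E : Type*} [MeasurableSpace G]
    [AddGroup G] [MeasurableNeg G] [NormedAddCommGroup E] [NormedSpace ℝ E] {μ : Measure G}
    [μ.IsNegInvariant] (f : G → E) :
    2 * ‖∫ y, f y ∂μ‖ₑ ≤ ∫⁻ y, ‖f y + f (-y)‖ₑ ∂μ := by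
  by_cases hf : Integrable f μ
  · calc 2 * ‖∫ y, f y ∂μ‖ₑ = ‖∫ y, f y + f (-y) ∂μ‖ₑ := by
          rw [integral_add hf hf.comp_neg, integral_neg_eq_self, ← two_smul ℝ, enorm_smul,
            Real.enorm_eq_ofReal zero_le_two, ENNReal.ofReal_ofNat]
      _ ≤ ∫⁻ y, ‖f y + f (-y)‖ₑ ∂μ := enorm_integral_le_lintegral_enorm _
  · simp [integral_undef hf]

lemma two_mul_lintegral_mul_enorm_conv_le_of_odd {k g : ℝ → ℂ} (hk : Measurable k)
    (hg : Measurable g) (hodd : ∀ y, g (-y) = -g y) {w : ℝ → ℝ≥0∞} (hw : Measurable w) :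
    2 * ∫⁻ x, w x * ‖∫ y, k (x - y) * g y‖ₑ ≤
      ∫⁻ y, ‖g y‖ₑ * ∫⁻ x, w x * ‖k (x - y) - k (x + y)‖ₑ := by
  have hsym : ∀ x, 2 * ‖∫ y, k (x - y) * g y‖ₑ ≤ ∫⁻ y, ‖k (x - y) - k (x + y)‖ₑ * ‖g y‖ₑ := by
    intro x
    refine (two_mul_enorm_integral_le_lintegral_enorm_add_comp_neg _).trans_eq ?_
    simp_rw [sub_neg_eq_add, hodd, ← enorm_mul, sub_mul, mul_neg, sub_eq_add_neg]
  calc 2 * ∫⁻ x, w x * ‖∫ y, k (x - y) * g y‖ₑ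
      = ∫⁻ x, w x * (2 * ‖∫ y, k (x - y) * g y‖ₑ) := by
        rw [← lintegral_const_mul' _ _ (by norm_num)]
        simp_rw [mul_left_comm]
    _ ≤ ∫⁻ x, w x * ∫⁻ y, ‖k (x - y) - k (x + y)‖ₑ * ‖g y‖ₑ := by gcongr with x; exact hsym x
    _ = ∫⁻ x, ∫⁻ y, w x * ‖k (x - y) - k (x + y)‖ₑ * ‖g y‖ₑ := by
        congr with x
        rw [← lintegral_const_mul _ (by fun_prop)]
        simp_rw [mul_assoc]
    _ = ∫⁻ y, ∫⁻ x, w x * ‖k (x - y) - k (x + y)‖ₑ * ‖g y‖ₑ :=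
        lintegral_lintegral_swap (by fun_prop)
    _ = ∫⁻ y, ‖g y‖ₑ * ∫⁻ x, w x * ‖k (x - y) - k (x + y)‖ₑ := by
        congr with y
        rw [← lintegral_const_mul _ (by fun_prop)]
        congr 1 with x
        ring

noncomputable def poleKernelDeriv (β γ νm νp : ℂ) (ξ : ℝ) : ℂ :=
  if 0 ≤ ξ then β * νm / γ * Complex.exp (νm * ξ) else β * νp / γ * Complex.exp (νp * ξ)

structure CriticalRootBounds (c C₁ : ℝ) (γ νm νp : ℂ) : Prop where
  norm_minus_le : ‖νm‖ ≤ C₁ * ‖γ‖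
  norm_plus_le : ‖νp‖ ≤ C₁ * ‖γ‖
  re_minus_le : νm.re ≤ -c * ‖γ‖
  le_re_plus : c * ‖γ‖ ≤ νp.re

section PoleKernel

variable {c C₁ : ℝ} {β γ νm νp : ℂ}

lemma measurable_poleKernelDeriv : Measurable (poleKernelDeriv β γ νm νp) :=
  Measurable.ite measurableSet_Ici (by fun_prop) (by fun_prop)

lemma norm_mul_div_le_of_norm_le_mul (hγ : γ ≠ 0) {ν : ℂ} (hν : ‖ν‖ ≤ C₁ * ‖γ‖) :
    ‖β * ν / γ‖ ≤ C₁ * ‖β‖ := by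
  rw [norm_div, norm_mul, div_le_iff₀ (norm_pos_iff.2 hγ)]
  nlinarith [norm_nonneg β]

lemma CriticalRootBounds.nonneg (h : CriticalRootBounds c C₁ γ νm νp) (hγ : γ ≠ 0) : 0 ≤ C₁ :=
  nonneg_of_mul_nonneg_left ((norm_nonneg _).trans h.norm_minus_le) (norm_pos_iff.2 hγ)

lemma norm_poleKernelDeriv_le (h : CriticalRootBounds c C₁ γ νm νp) (hγ : γ ≠ 0) (ξ : ℝ) :
    ‖poleKernelDeriv β γ νm νp ξ‖ ≤ C₁ * ‖β‖ * Real.exp (-(c * ‖γ‖ * |ξ|)) := by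
  have hC₁β : 0 ≤ C₁ * ‖β‖ := mul_nonneg (h.nonneg hγ) (norm_nonneg β)
  unfold poleKernelDeriv
  split_ifs with hξ
  · rw [norm_mul, abs_of_nonneg hξ]
    exact mul_le_mul (norm_mul_div_le_of_norm_le_mul hγ h.norm_minus_le)
      (norm_cexp_mul_ofReal_le (h.re_minus_le.trans_eq (neg_mul _ _)) hξ) (norm_nonneg _) hC₁β
  · rw [norm_mul, abs_of_neg (not_le.1 hξ), show νp * (ξ : ℂ) = -νp * ↑(-ξ) by push_cast; ring]
    refine mul_le_mul (norm_mul_div_le_of_norm_le_mul hγ h.norm_plus_le)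
      (norm_cexp_mul_ofReal_le ?_ (by linarith)) (norm_nonneg _) hC₁β
    simpa using h.le_re_plus

lemma norm_poleKernelDeriv_sub_le (h : CriticalRootBounds c C₁ γ νm νp) (hγ : γ ≠ 0)
    (hc : 0 ≤ c) (x y : ℝ) :
    ‖poleKernelDeriv β γ νm νp (x - y) - poleKernelDeriv β γ νm νp (x + y)‖ ≤
      2 * C₁ * ‖β‖ * Real.exp (-(c * ‖γ‖ * (|y| - |x|))) := by
  have hdecay : ∀ ξ, |y| - |x| ≤ |ξ| → ‖poleKernelDeriv β γ νm νp ξ‖ ≤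
      C₁ * ‖β‖ * Real.exp (-(c * ‖γ‖ * (|y| - |x|))) := fun ξ hξ =>
    (norm_poleKernelDeriv_le h hγ ξ).trans (by have := h.nonneg hγ; gcongr)
  calc _ ≤ _ := norm_sub_le _ _
    _ ≤ _ := add_le_add (hdecay _ ?_) (hdecay _ ?_)
    _ = _ := by ring
  · simpa [abs_sub_comm] using abs_sub_abs_le_abs_sub y x
  · simpa [add_comm] using abs_sub_abs_le_abs_sub y (-x)

lemma norm_poleKernelDeriv_sub_le_of_abs_lt (h : CriticalRootBounds c C₁ γ νm νp) (hγ : γ ≠ 0)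
    (hc : 0 ≤ c) {x y : ℝ} (hxy : |y| < |x|) :
    ‖poleKernelDeriv β γ νm νp (x - y) - poleKernelDeriv β γ νm νp (x + y)‖ ≤
      2 * (C₁ * ‖β‖) * (1 + 2 * C₁) * min 1 (‖γ‖ * |y|) *
        Real.exp (-(c * ‖γ‖ * (|x| - |y|))) := by
  wlog hy : 0 ≤ y generalizing y
  · have := this (y := -y) (by rwa [abs_neg]) (by linarith)
    rwa [sub_neg_eq_add, ← sub_eq_add_neg, norm_sub_rev, abs_neg] at this
  have hb : 0 ≤ c * ‖γ‖ := by positivity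
  have hC₁ := h.nonneg hγ
  rw [abs_of_nonneg hy] at hxy ⊢
  rcases lt_abs.1 hxy with hx | hx
  · rw [abs_of_pos (by linarith), norm_sub_rev, show x + y = x - y + 2 * y by ring]
    simp only [poleKernelDeriv, if_pos (by linarith : 0 ≤ x - y),
      if_pos (by linarith : 0 ≤ x - y + 2 * y)]
    refine (norm_mul_cexp_add_sub_le hb (h.re_minus_le.trans_eq (neg_mul _ _)) hC₁
      (norm_nonneg _) h.norm_minus_le (by linarith) hy).trans ?_
    gcongr
    exact norm_mul_div_le_of_norm_le_mul hγ h.norm_minus_le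
  · rw [abs_of_neg (by linarith)]
    simp only [poleKernelDeriv, if_neg (by linarith : ¬ 0 ≤ x - y),
      if_neg (by linarith : ¬ 0 ≤ x + y)]
    rw [show νp * ((x - y : ℝ) : ℂ) = -νp * ↑(-x - y + 2 * y) by push_cast; ring,
      show νp * ((x + y : ℝ) : ℂ) = -νp * ↑(-x - y) by push_cast; ring]
    refine (norm_mul_cexp_add_sub_le hb (by simpa using h.le_re_plus) hC₁ (norm_nonneg _)
      (by simpa using h.norm_plus_le) (by linarith) hy).trans ?_
    gcongr
    exact norm_mul_div_le_of_norm_le_mul hγ h.norm_plus_le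

lemma sqrt_mul_norm_poleKernelDeriv_sub_le (h : CriticalRootBounds c C₁ γ νm νp) (hγ : γ ≠ 0)
    (hc : 0 ≤ c) (x y : ℝ) :
    √(1 + x ^ 2) * ‖poleKernelDeriv β γ νm νp (x - y) - poleKernelDeriv β γ νm νp (x + y)‖ ≤
      2 * (C₁ * ‖β‖) * (1 + 2 * C₁) *
        (((min 1 (‖γ‖ * |y|) + 1) * √(1 + y ^ 2) + min 1 (‖γ‖ * |y|) * |(|x| - |y|)|) *
          Real.exp (-(c * ‖γ‖ * |(|x| - |y|)|))) := by
  set m := min 1 (‖γ‖ * |y|)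
  set d := √(1 + y ^ 2)
  have hm : 0 ≤ m := le_min zero_le_one (by positivity)
  have hd : 0 ≤ d := Real.sqrt_nonneg _
  have hC₁ := h.nonneg hγ
  rcases lt_or_ge |y| |x| with hxy | hxy
  · set w := |x| - |y|
    have hw : |w| = w := abs_of_pos (by linarith)
    have hweight : √(1 + x ^ 2) ≤ d + w := by
      have := sqrt_one_add_sq_le_add_abs_sub |x| |y|
      rwa [sq_abs, sq_abs, hw] at this
    rw [hw]
    calc _ ≤ (d + w) * (2 * (C₁ * ‖β‖) * (1 + 2 * C₁) * m * Real.exp (-(c * ‖γ‖ * w))) :=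
          mul_le_mul hweight (norm_poleKernelDeriv_sub_le_of_abs_lt h hγ hc hxy) (norm_nonneg _)
            (by linarith [Real.sqrt_nonneg (1 + x ^ 2)])
      _ = 2 * (C₁ * ‖β‖) * (1 + 2 * C₁) * ((m * d + m * w) * Real.exp (-(c * ‖γ‖ * w))) := by
          ring
      _ ≤ _ := by gcongr; nlinarith
  · set w := |y| - |x|
    have hw : |(|x| - |y|)| = w := by rw [abs_sub_comm]; exact abs_of_nonneg (by linarith)
    have hw0 : 0 ≤ w := by linarith
    rw [hw]
    calc _ ≤ d * (2 * C₁ * ‖β‖ * Real.exp (-(c * ‖γ‖ * w))) :=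
          mul_le_mul (sqrt_one_add_sq_le_of_abs_le hxy) (norm_poleKernelDeriv_sub_le h hγ hc x y)
            (norm_nonneg _) hd
      _ = 2 * (C₁ * ‖β‖) * 1 * (d * Real.exp (-(c * ‖γ‖ * w))) := by ring
      _ ≤ _ := by gcongr <;> nlinarith

lemma lintegral_sqrt_mul_enorm_poleKernelDeriv_sub_le (h : CriticalRootBounds c C₁ γ νm νp)
    (hγ : γ ≠ 0) (hc : 0 < c) (y : ℝ) :
    ∫⁻ x, ENNReal.ofReal √(1 + x ^ 2) *
        ‖poleKernelDeriv β γ νm νp (x - y) - poleKernelDeriv β γ νm νp (x + y)‖ₑ ≤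
      ENNReal.ofReal
        (4 * (2 * (C₁ * ‖β‖) * (1 + 2 * C₁)) * (2 / c + 1 / c ^ 2) * √(1 + y ^ 2) / ‖γ‖) := by
  set K := 2 * (C₁ * ‖β‖) * (1 + 2 * C₁)
  set m := min 1 (‖γ‖ * |y|)
  set d := √(1 + y ^ 2)
  set a := ‖γ‖
  have ha : 0 < a := norm_pos_iff.2 hγ
  have hK : 0 ≤ K := by have := h.nonneg hγ; positivity
  have hm : 0 ≤ m := le_min zero_le_one (by positivity)
  have hd : 0 ≤ d := Real.sqrt_nonneg _
  set F : ℝ → ℝ≥0∞ := fun s => ENNReal.ofReal (((m + 1) * d + m * s) * Real.exp (-(c * a * s)))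
  have hF : Measurable F := by fun_prop
  have hconst : (m + 1) * d / (c * a) + m / (c * a) ^ 2 ≤ (2 / c + 1 / c ^ 2) * d / a :=
    calc (m + 1) * d / (c * a) + m / (c * a) ^ 2 ≤ 2 * d / (c * a) + a * |y| / (c * a) ^ 2 := by
          gcongr
          · linarith [min_le_left 1 (a * |y|)]
          · exact min_le_right _ _
      _ = 2 / c * d / a + 1 / c ^ 2 * |y| / a := by field_simp
      _ ≤ (2 / c + 1 / c ^ 2) * d / a := by
          have : |y| ≤ d := Real.abs_le_sqrt (by nlinarith)
          rw [add_mul, add_div]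
          gcongr
  calc ∫⁻ x, ENNReal.ofReal √(1 + x ^ 2) *
        ‖poleKernelDeriv β γ νm νp (x - y) - poleKernelDeriv β γ νm νp (x + y)‖ₑ
      ≤ ∫⁻ x, ENNReal.ofReal K * F |(|x| - |y|)| := by
        refine lintegral_mono fun x => ?_
        rw [← ofReal_norm, ← ENNReal.ofReal_mul (Real.sqrt_nonneg _), ← ENNReal.ofReal_mul hK]
        exact ENNReal.ofReal_le_ofReal (sqrt_mul_norm_poleKernelDeriv_sub_le h hγ hc.le x y)
    _ = ENNReal.ofReal K * ∫⁻ x, F |(|x| - |y|)| := lintegral_const_mul' _ _ ENNReal.ofReal_ne_top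
    _ ≤ ENNReal.ofReal K * (4 * ∫⁻ s in Ici 0, F s) := by
        gcongr; exact lintegral_comp_abs_abs_sub_le hF _
    _ = ENNReal.ofReal (K * (4 * ((m + 1) * d / (c * a) + m / (c * a) ^ 2))) := by
        rw [lintegral_Ici_affine_mul_exp_neg_mul (by positivity) (by positivity) hm,
          ← ENNReal.ofReal_ofNat 4, ← ENNReal.ofReal_mul (by norm_num), ← ENNReal.ofReal_mul hK]
    _ ≤ _ := by
        apply ENNReal.ofReal_le_ofReal
        calc K * (4 * ((m + 1) * d / (c * a) + m / (c * a) ^ 2))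
            ≤ K * (4 * ((2 / c + 1 / c ^ 2) * d / a)) := by gcongr
          _ = _ := by ring

lemma lintegral_sqrt_mul_norm_integral_poleKernelDeriv_le (h : CriticalRootBounds c C₁ γ νm νp)
    (hγ : γ ≠ 0) (hc : 0 < c) {r : ℝ} (hr : 2 < r) {M : ℝ} (hM : 0 ≤ M) {g : ℝ → ℝ}
    (hg : Measurable g) (hodd : ∀ y, g (-y) = -g y)
    (hbound : ∀ y, |g y| ≤ M * √(1 + y ^ 2) ^ (-r)) :
    ∫⁻ x, ENNReal.ofReal (√(1 + x ^ 2) * ‖∫ y, poleKernelDeriv β γ νm νp (x - y) * g y‖) ≤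
      ENNReal.ofReal (4 * (2 * (C₁ * ‖β‖) * (1 + 2 * C₁)) * (2 / c + 1 / c ^ 2) *
        (∫ y, √(1 + y ^ 2) ^ (-(r - 1))) * M / ‖γ‖) := by
  set B := 4 * (2 * (C₁ * ‖β‖) * (1 + 2 * C₁)) * (2 / c + 1 / c ^ 2)
  have hB : 0 ≤ B := by have := h.nonneg hγ; positivity
  have hBM : 0 ≤ B * M / ‖γ‖ := by positivity
  have hdecay : ∀ y : ℝ, M * √(1 + y ^ 2) ^ (-r) * (B * √(1 + y ^ 2) / ‖γ‖) =
      B * M / ‖γ‖ * √(1 + y ^ 2) ^ (-(r - 1)) := fun y => by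
    rw [show -(r - 1) = -r + 1 by ring, Real.rpow_add (by positivity), Real.rpow_one]
    ring
  calc ∫⁻ x, ENNReal.ofReal (√(1 + x ^ 2) * ‖∫ y, poleKernelDeriv β γ νm νp (x - y) * g y‖)
      ≤ 2 * ∫⁻ x, ENNReal.ofReal √(1 + x ^ 2) *
          ‖∫ y, poleKernelDeriv β γ νm νp (x - y) * (g y : ℂ)‖ₑ := by
        simp_rw [ENNReal.ofReal_mul (Real.sqrt_nonneg _), ofReal_norm]
        exact le_mul_of_one_le_left' one_le_two
    _ ≤ ∫⁻ y, ‖(g y : ℂ)‖ₑ * ∫⁻ x, ENNReal.ofReal √(1 + x ^ 2) *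
          ‖poleKernelDeriv β γ νm νp (x - y) - poleKernelDeriv β γ νm νp (x + y)‖ₑ :=
        two_mul_lintegral_mul_enorm_conv_le_of_odd measurable_poleKernelDeriv (by fun_prop)
          (fun y => by simp [hodd]) (by fun_prop)
    _ ≤ ∫⁻ y, ENNReal.ofReal (M * √(1 + y ^ 2) ^ (-r)) *
          ENNReal.ofReal (B * √(1 + y ^ 2) / ‖γ‖) := by
        gcongr with y
        · rw [← ofReal_norm, Complex.norm_real, Real.norm_eq_abs]
          exact ENNReal.ofReal_le_ofReal (hbound y)
        · exact lintegral_sqrt_mul_enorm_poleKernelDeriv_sub_le h hγ hc y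
    _ = ∫⁻ y, ENNReal.ofReal (B * M / ‖γ‖) * ENNReal.ofReal (√(1 + y ^ 2) ^ (-(r - 1))) := by
        congr 1 with y
        rw [← ENNReal.ofReal_mul (by positivity), hdecay, ENNReal.ofReal_mul hBM]
    _ = ENNReal.ofReal (B * M / ‖γ‖) * ∫⁻ y, ENNReal.ofReal (√(1 + y ^ 2) ^ (-(r - 1))) :=
        lintegral_const_mul' _ _ ENNReal.ofReal_ne_top
    _ = _ := by
        rw [← ofReal_integral_eq_lintegral_ofReal
          (integrable_sqrt_one_add_sq_rpow_neg (by linarith))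
          (Filter.Eventually.of_forall fun y => by positivity), ← ENNReal.ofReal_mul hBM]
        ring_nf

end PoleKernel

/-- Lemma 3.4 (weighted `L¹` estimate): the spatial derivative of the principal part of
the resolvent kernel, convolved with odd algebraically localized data, is of size
`M/|γ|` in the weighted `L¹` norm. Here `⟨x⟩ = (1+x²)^{1/2}`. -/
theorem stmt_4 (r c C₁ : ℝ) (hr : 2 < r) (hc : 0 < c) (hC₁ : 0 < C₁) (β : ℂ) :
    ∃ C > (0:ℝ), ∀ (γ νm νp : ℂ), γ ≠ 0 →
      ‖νm‖ ≤ C₁ * ‖γ‖ →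
      ‖νp‖ ≤ C₁ * ‖γ‖ →
      νm.re ≤ -c * ‖γ‖ →
      c * ‖γ‖ ≤ νp.re →
      ∀ (M : ℝ) (g : ℝ → ℝ), 0 < M → Measurable g →
        (∀ y : ℝ, g (-y) = -g y) →
        (∀ y : ℝ, |g y| ≤ M * Real.sqrt (1 + y ^ 2) ^ (-r)) →
        (∫ x : ℝ, Real.sqrt (1 + x ^ 2) *
            ‖(∫ y : ℝ,
              (if 0 ≤ x - y then β * νm / γ * Complex.exp (νm * ((x - y : ℝ) : ℂ))
                else β * νp / γ * Complex.exp (νp * ((x - y : ℝ) : ℂ))) * (g y : ℂ))‖)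
          ≤ C * M / ‖γ‖ := by
  set A := 4 * (2 * (C₁ * ‖β‖) * (1 + 2 * C₁)) * (2 / c + 1 / c ^ 2) *
    ∫ y, √(1 + y ^ 2) ^ (-(r - 1))
  have hA : 0 ≤ A := by positivity
  refine ⟨A + 1, by positivity, fun γ νm νp hγ hm hp hm' hp' M g hM hg hodd hbound => ?_⟩
  calc _ ≤ A * M / ‖γ‖ :=
        integral_le_of_lintegral_ofReal_le (fun x => by positivity) (by positivity)
          (lintegral_sqrt_mul_norm_integral_poleKernelDeriv_le ⟨hm, hp, hm', hp'⟩ hγ hc hr hM.le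
            hg hodd hbound)
    _ ≤ (A + 1) * M / ‖γ‖ := by gcongr; linarith
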